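/- For all natural numbers m₁ and m₂ with m₁ + m₂ odd, and for every real x with x ≠ ±1, U_{m₁}(x)·U_{m₂}(x) = T^{ns}_{|m₁−m₂|}(x) − T^{ns}_{m₁+m₂+2}(x), where T^{ns}_n(x) = (T_n(x)−x)/(2(1−x²)) for odd n. -/

import Mathlib

open Polynomial Polynomial.Chebyshev

/-- Nonsingular Chebyshev function for odd index. -/
noncomputable def TnsOdd (n : ℤ) (x : ℝ) : ℝ :=
  ((T ℝ n).eval x - x) / (2 * (1 - x ^ 2))

/-! With `x = cos θ` one has `(1 - x²) Uₐ Uᵦ = sin((a+1)θ) sin((b+1)θ)`, which is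
`(cos((a-b)θ) - cos((a+b+2)θ)) / 2`. Polynomially: for fixed `a`, both
`2(1 - X²) Uₐ Uᵦ` and `T_{a-b} - T_{a+b+2}` satisfy the Chebyshev recurrence in `b ∈ ℤ`
and agree at `b = -1` and `b = 0`, hence everywhere. Evaluating at `x ≠ ±1` and dividing by
`2(1 - x²)` gives the theorem, since the `-x` terms of `TnsOdd` cancel and `T` is even. -/

theorem eq_of_chebyshev_recurrence {R : Type*} [Ring R] {s t : ℤ → R} (c : R)
    (hs : ∀ n, s (n + 2) = c * s (n + 1) - s n) (ht : ∀ n, t (n + 2) = c * t (n + 1) - t n)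
    (k : ℤ) (h₀ : s k = t k) (h₁ : s (k + 1) = t (k + 1)) : s = t := by
  suffices h : ∀ n, s n = t n ∧ s (n + 1) = t (n + 1) from funext fun n ↦ (h n).1
  intro n
  induction n using Int.inductionOn' (b := k) with
  | zero => exact ⟨h₀, h₁⟩
  | succ n _ ih =>
    refine ⟨ih.2, ?_⟩
    rw [add_assoc, one_add_one_eq_two, hs, ht, ih.1, ih.2]
  | pred n _ ih =>
    have hs' := hs (n - 1)
    have ht' := ht (n - 1)
    rw [sub_add_cancel, show n - 1 + 2 = n + 1 by ring, ih.1, ih.2] at hs'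
    rw [sub_add_cancel, show n - 1 + 2 = n + 1 by ring] at ht'
    rw [sub_add_cancel]
    exact ⟨sub_right_injective (hs'.symm.trans ht'), ih.1⟩

variable (R : Type*) [CommRing R]

theorem T_abs (n : ℤ) : T R |n| = T R n := by
  rw [← Int.natCast_natAbs, T_natAbs]

theorem two_mul_one_sub_X_sq_mul_U (n : ℤ) :
    2 * (1 - X ^ 2) * U R n = T R n - T R (n + 2) := by
  linear_combination 2 * one_sub_X_sq_mul_U_eq_pol_in_T R n - T_add_two R n

theorem two_mul_one_sub_X_sq_mul_U_mul_U (a b : ℤ) :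
    2 * (1 - X ^ 2) * U R a * U R b = T R (a - b) - T R (a + b + 2) := by
  refine congrFun (eq_of_chebyshev_recurrence (s := fun b ↦ 2 * (1 - X ^ 2) * U R a * U R b)
    (t := fun b ↦ T R (a - b) - T R (a + b + 2)) (2 * X) (fun n ↦ ?_) (fun n ↦ ?_) (-1) ?_ ?_) b
  · rw [U_add_two]
    ring
  · rw [show a + (n + 2) + 2 = a + n + 2 + 2 by ring, T_add_two,
      show a - (n + 2) = a - n - 2 by ring, T_sub_two]
    ring_nf
  · rw [U_neg_one, mul_zero, show a + -1 + 2 = a - -1 by ring, sub_self]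
  · simpa using two_mul_one_sub_X_sq_mul_U R a

theorem U_product_eq_Tns_odd_general (m₁ m₂ : ℕ) (x : ℝ)
    (hx1 : x ≠ 1) (hx2 : x ≠ -1) :
    (U ℝ m₁).eval x * (U ℝ m₂).eval x =
      TnsOdd |(m₁ : ℤ) - m₂| x - TnsOdd ((m₁ : ℤ) + m₂ + 2) x := by
  have hx : 2 * (1 - x ^ 2) ≠ 0 :=
    mul_ne_zero two_ne_zero (sub_ne_zero.2 (sq_ne_one_iff.2 ⟨hx1, hx2⟩).symm)
  have key := congrArg (eval x) (two_mul_one_sub_X_sq_mul_U_mul_U ℝ m₁ m₂)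
  simp only [eval_mul, eval_sub, eval_ofNat, eval_one, eval_pow, eval_X] at key
  rw [TnsOdd, TnsOdd, T_abs, div_sub_div_same, sub_sub_sub_cancel_right, eq_div_iff hx]
  linear_combination key

theorem U_product_eq_Tns_odd (m₁ m₂ : ℕ) (h : Odd (m₁ + m₂)) (x : ℝ)
    (hx1 : x ≠ 1) (hx2 : x ≠ -1) :
    (U ℝ m₁).eval x * (U ℝ m₂).eval x =
      TnsOdd |(m₁ : ℤ) - m₂| x - TnsOdd ((m₁ : ℤ) + m₂ + 2) x :=
  U_product_eq_Tns_odd_general m₁ m₂ x hx1 hx2
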